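/- arXiv:1908.10491 — 2 statements merged into one kernel-verified Lean document; each statement's English description precedes it below -/
import Mathlib

section
/- Let n ≥ 4. Every IP-SEG model of the chordless cycle C_n that contains at least one interval segment has either exactly one interval arc, or exactly two interval arcs whose interval segments lie on different horizontal lines (one arc entirely on L₁ and the other entirely on L₂). In particular, an IP-SEG model of a chordless cycle cannot have more than one interval arc lying on the same horizontal line. -/
/-!
Every segment avoiding a permutation segment `z` lies entirely left or entirely right of `z`,
and so does every interval segment avoiding an interval segment `z` on the same line. Hence
along a chain of consecutively meeting segments that all avoid `z` the side of `z` is constant.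

Not all segments are intervals: otherwise, for `n ≥ 4`, the two neighbours of the interval
with the rightmost left end would meet. Suppose two interval arcs `A` and `B` lie on the same line, `A`
left of `B`. Let `q'`, `r` be the segments just before and after `A`, and `q`, `r'` those just
before and after `B`; `q` and `r'` are permutation segments. At the height of the line, `q'`
meets `A` left of where `q` meets `B`, so `q'` is left of `q`, and the path `q', …, r'` avoids
`q`: thus `r'` is left of `q`. Symmetrically `r` is left of `r'` and the path `r, …, q` avoids
`r'`, so `q` is left of `r'`, a contradiction. With only two lines, there are at most two arcs.
-/

/-- A segment between the horizontal lines `L₁ = {y = 1}` and `L₂ = {y = 2}`,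
given by its two endpoints, each of which lies on `L₁` or `L₂`. -/
structure IPSeg where
  p : ℝ × ℝ
  q : ℝ × ℝ
  hp : p.2 = 1 ∨ p.2 = 2
  hq : q.2 = 1 ∨ q.2 = 2

namespace IPSeg

/-- The closed line segment in `ℝ²` determined by the two endpoints. -/
def carrier (s : IPSeg) : Set (ℝ × ℝ) := segment ℝ s.p s.q

/-- An interval segment: both endpoints on the same horizontal line. -/
def IsInterval (s : IPSeg) : Prop := s.p.2 = s.q.2

/-- A permutation segment: one endpoint on each horizontal line. -/
def IsPermutation (s : IPSeg) : Prop := s.p.2 ≠ s.q.2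

/-- The (set of) endpoints of the segment. -/
def endpoints (s : IPSeg) : Set (ℝ × ℝ) := {s.p, s.q}

end IPSeg

/-- An IP-SEG model of a graph: distinct vertices are adjacent iff their segments meet. -/
def IsIPSEGModel {V : Type*} (G : SimpleGraph V) (s : V → IPSeg) : Prop :=
  ∀ u v : V, u ≠ v → (G.Adj u v ↔ ((s u).carrier ∩ (s v).carrier).Nonempty)

/-- An IP-SEG* model: an IP-SEG model in which all interval segments lie on one line. -/
def IsIPSEGStarModel {V : Type*} (G : SimpleGraph V) (s : V → IPSeg) : Prop :=
  IsIPSEGModel G s ∧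
    ∃ c : ℝ, (c = 1 ∨ c = 2) ∧ ∀ v : V, (s v).IsInterval → (s v).p.2 = c

/-- The chordless cycle `C_n` on vertex set `ZMod n`, with edges exactly
`v — v + 1` (indices modulo `n`). -/
def CycleGraph (n : ℕ) : SimpleGraph (ZMod n) :=
  SimpleGraph.fromRel (fun u v => v = u + 1)

/-- `v` is the start of an interval arc: `v` is assigned an interval segment but its
cyclic predecessor is not. -/
def IntArcStart (n : ℕ) (s : ZMod n → IPSeg) (v : ZMod n) : Prop :=
  (s v).IsInterval ∧ ¬ (s (v - 1)).IsInterval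

/-- The interval arc starting at `v` has length `l`: the `l` consecutive vertices
`v, v+1, …, v+l-1` carry interval segments and `v + l` does not. -/
def IntArcLen (n : ℕ) (s : ZMod n → IPSeg) (v : ZMod n) (l : ℕ) : Prop :=
  (∀ k : ℕ, k < l → (s (v + (k : ZMod n))).IsInterval) ∧
    ¬ (s (v + (l : ZMod n))).IsInterval

/-- `v` is the start of a permutation arc. -/
def PermArcStart (n : ℕ) (s : ZMod n → IPSeg) (v : ZMod n) : Prop :=
  (s v).IsPermutation ∧ ¬ (s (v - 1)).IsPermutation

/-- The permutation arc starting at `v` has length `l`. -/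
def PermArcLen (n : ℕ) (s : ZMod n → IPSeg) (v : ZMod n) (l : ℕ) : Prop :=
  (∀ k : ℕ, k < l → (s (v + (k : ZMod n))).IsPermutation) ∧
    ¬ (s (v + (l : ZMod n))).IsPermutation


open Set

namespace IPSeg

variable {s u v z : IPSeg} {a b : ℝ × ℝ}

-- `low`, `high` are the abscissae on `L₁`, `L₂`; they carry meaning only for permutation segments.
noncomputable def low (s : IPSeg) : ℝ := if s.p.2 = 1 then s.p.1 else s.q.1

noncomputable def high (s : IPSeg) : ℝ := if s.p.2 = 2 then s.p.1 else s.q.1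

noncomputable def xAt (s : IPSeg) (y : ℝ) : ℝ := (2 - y) * s.low + (y - 1) * s.high

def LeftOf (u z : IPSeg) : Prop :=
  ∀ a ∈ u.carrier, ∀ b ∈ z.carrier, a.2 = b.2 → a.1 < b.1

theorem IsInterval.mem_carrier_iff (hs : s.IsInterval) :
    a ∈ s.carrier ↔ a.2 = s.p.2 ∧ a.1 ∈ uIcc s.p.1 s.q.1 := by
  have hq : s.q = (s.q.1, s.p.2) := Prod.ext rfl hs.symm
  rw [carrier, hq, ← Prod.image_mk_segment_left, segment_eq_uIcc]
  constructor
  · rintro ⟨x, hx, rfl⟩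
    exact ⟨rfl, hx⟩
  · rintro ⟨h2, h1⟩
    exact ⟨a.1, h1, Prod.ext rfl h2.symm⟩

theorem IsInterval.snd_eq (hs : s.IsInterval) (ha : a ∈ s.carrier) : a.2 = s.p.2 :=
  (hs.mem_carrier_iff.1 ha).1

theorem IsPermutation.carrier_eq (hs : s.IsPermutation) :
    s.carrier = segment ℝ (s.low, 1) (s.high, 2) := by
  obtain ⟨⟨x, y⟩, ⟨x', y'⟩, hp, hq⟩ := s
  simp only [IsPermutation] at hs hp hq
  simp only [carrier, low, high]
  rcases hp with rfl | rfl <;> rcases hq with rfl | rfl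
  · exact absurd rfl hs
  · norm_num
  · norm_num [segment_symm]
  · exact absurd rfl hs

theorem IsPermutation.mem_carrier_iff (hs : s.IsPermutation) :
    a ∈ s.carrier ↔ a.2 ∈ Icc 1 2 ∧ a.1 = s.xAt a.2 := by
  rw [hs.carrier_eq, segment_eq_image]
  constructor
  · rintro ⟨θ, ⟨h0, h1⟩, rfl⟩
    simp only [Prod.fst_add, Prod.snd_add, Prod.smul_fst, Prod.smul_snd, smul_eq_mul, xAt,
      mem_Icc]
    exact ⟨⟨by linarith, by linarith⟩, by ring⟩
  · rintro ⟨⟨h1, h2⟩, hx⟩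
    refine ⟨a.2 - 1, ⟨by linarith, by linarith⟩, Prod.ext ?_ ?_⟩ <;>
      simp only [Prod.fst_add, Prod.snd_add, Prod.smul_fst, Prod.smul_snd, smul_eq_mul, hx, xAt] <;>
      ring

theorem snd_mem_Icc_of_mem_carrier (ha : a ∈ s.carrier) : a.2 ∈ Icc (1 : ℝ) 2 := by
  by_cases hs : s.IsInterval
  · rw [(hs.mem_carrier_iff).1 ha |>.1]
    rcases s.hp with h | h <;> simp [h]
  · exact ((IsPermutation.mem_carrier_iff hs).1 ha).1

theorem LeftOf.not_leftOf (h : u.LeftOf z) (ha : a ∈ u.carrier) (hb : b ∈ z.carrier)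
    (hab : a.2 = b.2) : ¬ z.LeftOf u :=
  fun h' => (h a ha b hb hab).asymm (h' b hb a ha hab.symm)

theorem leftOf_of_lt (huz : u.LeftOf z ∨ z.LeftOf u) (ha : a ∈ u.carrier) (hb : b ∈ z.carrier)
    (hab : a.2 = b.2) (hlt : a.1 < b.1) : u.LeftOf z :=
  huz.resolve_right fun h => (h b hb a ha hab.symm).asymm hlt

theorem leftOf_iff_lt (huz : u.LeftOf z ∨ z.LeftOf u) (ha : a ∈ u.carrier) (hb : b ∈ z.carrier)
    (hab : a.2 = b.2) : u.LeftOf z ↔ a.1 < b.1 :=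
  ⟨fun h => h a ha b hb hab, leftOf_of_lt huz ha hb hab⟩

theorem IsPermutation.leftOf_of_lt (hu : u.IsPermutation) (hv : v.IsPermutation)
    (hlow : u.low < v.low) (hhigh : u.high < v.high) : u.LeftOf v := by
  intro a ha b hb hab
  rw [hu.mem_carrier_iff] at ha
  rw [hv.mem_carrier_iff] at hb
  obtain ⟨h1, h2⟩ := hb.1
  rw [ha.2, hb.2, hab, xAt, xAt]
  rcases le_or_gt b.2 (3 / 2) with hy | hy
  · nlinarith [mul_pos (by linarith : (0 : ℝ) < 2 - b.2) (sub_pos.2 hlow),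
      mul_nonneg (by linarith : (0 : ℝ) ≤ b.2 - 1) (sub_pos.2 hhigh).le]
  · nlinarith [mul_nonneg (by linarith : (0 : ℝ) ≤ 2 - b.2) (sub_pos.2 hlow).le,
      mul_pos (by linarith : (0 : ℝ) < b.2 - 1) (sub_pos.2 hhigh)]

theorem IsPermutation.leftOf_or_leftOf (hu : u.IsPermutation) (hv : v.IsPermutation)
    (hd : ¬ (u.carrier ∩ v.carrier).Nonempty) : u.LeftOf v ∨ v.LeftOf u := by
  have hg : ContinuousOn (fun y => u.xAt y - v.xAt y) (uIcc 1 2) := by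
    unfold xAt
    fun_prop
  have h0 : (0 : ℝ) ∉ uIcc (u.low - v.low) (u.high - v.high) := by
    intro h0
    obtain ⟨y, hy, hxy⟩ := intermediate_value_uIcc hg (by norm_num [xAt] at h0 ⊢; exact h0)
    rw [uIcc_of_le one_le_two] at hy
    exact hd ⟨(u.xAt y, y), hu.mem_carrier_iff.2 ⟨hy, rfl⟩,
      hv.mem_carrier_iff.2 ⟨hy, by simp only at hxy; linarith⟩⟩
  simp only [mem_uIcc, not_or, not_and_or, not_le] at h0
  rcases le_or_gt (u.low - v.low) 0 with h | h
  · left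
    exact hu.leftOf_of_lt hv (by grind) (by grind)
  · right
    exact hv.leftOf_of_lt hu (by grind) (by grind)

theorem IsPermutation.leftOf_or_leftOf_of_isInterval (hz : z.IsPermutation)
    (hu : u.IsInterval) (hd : ¬ (u.carrier ∩ z.carrier).Nonempty) :
    u.LeftOf z ∨ z.LeftOf u := by
  have hc := snd_mem_Icc_of_mem_carrier (left_mem_segment ℝ u.p u.q)
  have hx : z.xAt u.p.2 ∉ uIcc u.p.1 u.q.1 := fun hx =>
    hd ⟨(z.xAt u.p.2, u.p.2), hu.mem_carrier_iff.2 ⟨rfl, hx⟩, hz.mem_carrier_iff.2 ⟨hc, rfl⟩⟩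
  simp only [uIcc, mem_Icc, not_and_or, not_le] at hx
  rcases hx with hx | hx
  · right
    intro a ha b hb hab
    rw [hz.mem_carrier_iff] at ha
    rw [hu.mem_carrier_iff] at hb
    rw [ha.2, hab, hb.1]
    exact hx.trans_le hb.2.1
  · left
    intro a ha b hb hab
    rw [hu.mem_carrier_iff] at ha
    rw [hz.mem_carrier_iff] at hb
    rw [hb.2, ← hab, ha.1]
    exact ha.2.2.trans_lt hx

theorem IsPermutation.leftOf_or_leftOf_of_not_meet (hz : z.IsPermutation)
    (hd : ¬ (u.carrier ∩ z.carrier).Nonempty) : u.LeftOf z ∨ z.LeftOf u := by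
  by_cases hu : u.IsInterval
  · exact hz.leftOf_or_leftOf_of_isInterval hu hd
  · exact IsPermutation.leftOf_or_leftOf hu hz hd

theorem IsInterval.leftOf_or_leftOf (hu : u.IsInterval) (hz : z.IsInterval)
    (hline : u.p.2 = z.p.2) (hd : ¬ (u.carrier ∩ z.carrier).Nonempty) :
    u.LeftOf z ∨ z.LeftOf u := by
  have hsep : u.p.1 ⊔ u.q.1 < z.p.1 ⊓ z.q.1 ∨ z.p.1 ⊔ z.q.1 < u.p.1 ⊓ u.q.1 := by
    by_contra! h
    refine hd ⟨((u.p.1 ⊓ u.q.1) ⊔ (z.p.1 ⊓ z.q.1), u.p.2), hu.mem_carrier_iff.2 ⟨rfl, ?_⟩,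
      hz.mem_carrier_iff.2 ⟨hline, ?_⟩⟩ <;>
    simp only [uIcc, mem_Icc] <;> constructor <;> grind
  rcases hsep with h | h
  · left
    intro a ha b hb _
    rw [hu.mem_carrier_iff] at ha
    rw [hz.mem_carrier_iff] at hb
    exact ha.2.2.trans_lt (h.trans_le hb.2.1)
  · right
    intro a ha b hb _
    rw [hz.mem_carrier_iff] at ha
    rw [hu.mem_carrier_iff] at hb
    exact ha.2.2.trans_lt (h.trans_le hb.2.1)

theorem IsInterval.meet_of_le (hu : u.IsInterval) (hw : z.IsInterval) (hv : v.IsInterval)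
    (huw : (u.carrier ∩ z.carrier).Nonempty) (hwv : (z.carrier ∩ v.carrier).Nonempty)
    (hlu : u.p.1 ⊓ u.q.1 ≤ z.p.1 ⊓ z.q.1) (hlv : v.p.1 ⊓ v.q.1 ≤ z.p.1 ⊓ z.q.1) :
    (u.carrier ∩ v.carrier).Nonempty := by
  obtain ⟨a, hau, haz⟩ := huw
  obtain ⟨b, hbz, hbv⟩ := hwv
  rw [hu.mem_carrier_iff] at hau
  rw [hw.mem_carrier_iff] at haz hbz
  rw [hv.mem_carrier_iff] at hbv
  simp only [uIcc, mem_Icc] at hau haz hbz hbv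
  refine ⟨(z.p.1 ⊓ z.q.1, z.p.2), hu.mem_carrier_iff.2 ⟨by grind, ?_⟩,
    hv.mem_carrier_iff.2 ⟨by grind, ?_⟩⟩ <;>
  simp only [uIcc, mem_Icc] <;> grind

end IPSeg

open IPSeg

-- A model of `C_n` read along the cycle as an `n`-periodic sequence, so that arcs are
-- intervals of natural numbers.
structure IsCycleRealization (n : ℕ) (f : ℕ → IPSeg) : Prop where
  periodic : Function.Periodic f n
  meet_succ : ∀ i, ((f i).carrier ∩ (f (i + 1)).carrier).Nonempty
  not_meet : ∀ i j, i + 2 ≤ j → j + 2 ≤ i + n → ¬ ((f i).carrier ∩ (f j).carrier).Nonempty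

namespace IsCycleRealization

variable {n : ℕ} {f : ℕ → IPSeg} {z : IPSeg} {i j : ℕ}

theorem meet_pred (hf : IsCycleRealization n f) {k : ℕ} (hk : 0 < k) :
    ((f (k - 1)).carrier ∩ (f k).carrier).Nonempty := by
  simpa [Nat.sub_add_cancel hk] using hf.meet_succ (k - 1)

theorem leftOf_iff (hf : IsCycleRealization n f) (hij : i ≤ j)
    (hheight : ∀ k, i ≤ k → k < j → ∀ a ∈ (f k).carrier, ∃ b ∈ z.carrier, a.2 = b.2)
    (hside : ∀ k, i ≤ k → k ≤ j → (f k).LeftOf z ∨ z.LeftOf (f k)) :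
    ((f i).LeftOf z ↔ (f j).LeftOf z) ∧ (z.LeftOf (f i) ↔ z.LeftOf (f j)) := by
  induction j, hij using Nat.le_induction with
  | base => exact ⟨Iff.rfl, Iff.rfl⟩
  | succ j hij ih =>
    obtain ⟨a, ha, ha'⟩ := hf.meet_succ j
    obtain ⟨b, hb, hab⟩ := hheight j hij j.lt_succ_self a ha
    have hj := hside j hij j.le_succ
    have hj' := hside (j + 1) (hij.trans j.le_succ) le_rfl
    obtain ⟨ih₁, ih₂⟩ := ih (fun k hk hkj => hheight k hk (hkj.trans j.lt_succ_self))
      (fun k hk hkj => hside k hk (hkj.trans j.le_succ))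
    refine ⟨ih₁.trans ?_, ih₂.trans ?_⟩
    · rw [leftOf_iff_lt hj ha hb hab, leftOf_iff_lt hj' ha' hb hab]
    · rw [leftOf_iff_lt hj.symm hb ha hab.symm, leftOf_iff_lt hj'.symm hb ha' hab.symm]

theorem leftOf_iff_of_isPermutation (hf : IsCycleRealization n f) (hz : z.IsPermutation)
    (hij : i ≤ j) (hd : ∀ k, i ≤ k → k ≤ j → ¬ ((f k).carrier ∩ z.carrier).Nonempty) :
    (f i).LeftOf z ↔ (f j).LeftOf z :=
  (hf.leftOf_iff hij
    (fun _ _ _ a ha => ⟨(z.xAt a.2, a.2),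
      hz.mem_carrier_iff.2 ⟨snd_mem_Icc_of_mem_carrier (a := a) ha, rfl⟩, rfl⟩)
    (fun k hk hkj => hz.leftOf_or_leftOf_of_not_meet (hd k hk hkj))).1

theorem leftOf_iff_of_isInterval (hf : IsCycleRealization n f) (hz : z.IsInterval)
    (hij : i ≤ j) (hint : ∀ k, i ≤ k → k ≤ j → (f k).IsInterval ∧ (f k).p.2 = z.p.2)
    (hd : ∀ k, i ≤ k → k ≤ j → ¬ ((f k).carrier ∩ z.carrier).Nonempty) :
    ((f i).LeftOf z ↔ (f j).LeftOf z) ∧ (z.LeftOf (f i) ↔ z.LeftOf (f j)) :=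
  hf.leftOf_iff hij
    (fun k hk hkj _ ha => ⟨z.p, left_mem_segment ℝ z.p z.q,
      ((hint k hk hkj.le).1.snd_eq ha).trans (hint k hk hkj.le).2⟩)
    (fun k hk hkj => (hint k hk hkj).1.leftOf_or_leftOf hz (hint k hk hkj).2 (hd k hk hkj))

variable {c : ℝ} {d l l' : ℕ}

theorem leftOf_of_leftOf_of_arcs (hf : IsCycleRealization n f) (hl : 0 < l) (hld : l < d)
    (hl' : 0 < l') (hdl' : d + l' < n) (hA : ∀ k < l, (f k).IsInterval ∧ (f k).p.2 = c)
    (hB : ∀ k, d ≤ k → k < d + l' → (f k).IsInterval ∧ (f k).p.2 = c)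
    (h : (f 0).LeftOf (f d)) : (f (l - 1)).LeftOf (f (d + l' - 1)) := by
  obtain ⟨hBint, hBc⟩ := hB d le_rfl (by omega)
  obtain ⟨hAint, hAc⟩ := hA (l - 1) (by omega)
  have hAd : (f (l - 1)).LeftOf (f d) :=
    ((hf.leftOf_iff_of_isInterval hBint (Nat.zero_le _)
      (fun k _ hk => ⟨(hA k (by omega)).1, (hA k (by omega)).2.trans hBc.symm⟩)
      (fun k _ hk => hf.not_meet k d (by omega) (by omega))).1.1 h)
  exact (hf.leftOf_iff_of_isInterval hAint (by omega : d ≤ d + l' - 1)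
      (fun k hk hk' => ⟨(hB k hk (by omega)).1, (hB k hk (by omega)).2.trans hAc.symm⟩)
      (fun k hk hk' => by
        rw [Set.inter_comm]
        exact hf.not_meet (l - 1) k (by omega) (by omega))).2.1 hAd

theorem not_leftOf_of_arcs (hf : IsCycleRealization n f) (hl : 0 < l) (hld : l < d)
    (hl' : 0 < l') (hdl' : d + l' < n) (hA : ∀ k < l, (f k).IsInterval ∧ (f k).p.2 = c)
    (hB : ∀ k, d ≤ k → k < d + l' → (f k).IsInterval ∧ (f k).p.2 = c)
    (hq : (f (d - 1)).IsPermutation) (hr' : (f (d + l')).IsPermutation) :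
    ¬ (f 0).LeftOf (f d) := by
  intro h
  have hAB := hf.leftOf_of_leftOf_of_arcs hl hld hl' hdl' hA hB h
  have onLine : ∀ {k m}, (f k).IsInterval ∧ (f k).p.2 = c → m ∈ (f k).carrier → m.2 = c :=
    fun hk hm => (hk.1.snd_eq hm).trans hk.2
  obtain ⟨mq', hmq'₁, hmq'₂⟩ := hf.meet_pred (k := n) (by omega)
  rw [hf.periodic.eq] at hmq'₂
  obtain ⟨mq, hmq₁, hmq₂⟩ := hf.meet_pred (k := d) (by omega)
  obtain ⟨mr, hmr₁, hmr₂⟩ := hf.meet_pred hl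
  obtain ⟨mr', hmr'₁, hmr'₂⟩ := hf.meet_pred (k := d + l') (by omega)
  have hq'c := onLine (hA 0 hl) hmq'₂
  have hqc := onLine (hB d le_rfl (by omega)) hmq₂
  have hrc := onLine (hA _ (by omega)) hmr₁
  have hr'c := onLine (hB _ (by omega) (by omega)) hmr'₁
  -- `q' = f (n - 1)` is left of `q = f (d - 1)`, hence so is `r' = f (d + l')`: the path
  -- from `r'` to `q'` avoids `q`
  have hq'q : (f (n - 1)).LeftOf (f (d - 1)) :=
    leftOf_of_lt (hq.leftOf_or_leftOf_of_not_meet (by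
        rw [Set.inter_comm]; exact hf.not_meet (d - 1) (n - 1) (by omega) (by omega)))
      hmq'₁ hmq₁ (hq'c.trans hqc.symm) (h mq' hmq'₂ mq hmq₂ (hq'c.trans hqc.symm))
  have hr'q : (f (d + l')).LeftOf (f (d - 1)) :=
    (hf.leftOf_iff_of_isPermutation hq (by omega : d + l' ≤ n - 1) (fun k hk hk' => by
        rw [Set.inter_comm]; exact hf.not_meet (d - 1) k (by omega) (by omega))).2 hq'q
  -- `r = f l` is left of `r'`, hence so is `q`: the path from `r` to `q` avoids `r'`
  have hrr' : (f l).LeftOf (f (d + l')) :=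
    leftOf_of_lt (hr'.leftOf_or_leftOf_of_not_meet (hf.not_meet l (d + l') (by omega) (by omega)))
      hmr₂ hmr'₂ (hrc.trans hr'c.symm) (hAB mr hmr₁ mr' hmr'₁ (hrc.trans hr'c.symm))
  have hqr' : (f (d - 1)).LeftOf (f (d + l')) :=
    (hf.leftOf_iff_of_isPermutation hr' (by omega : l ≤ d - 1) (fun k hk hk' =>
        hf.not_meet k (d + l') (by omega) (by omega))).1 hrr'
  exact hqr'.not_leftOf hmq₁ hmr'₂ (hqc.trans hr'c.symm) hr'q

theorem snd_eq_of_isInterval (hf : IsCycleRealization n f) (h : ∀ k < l, (f k).IsInterval) :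
    ∀ k < l, (f k).p.2 = (f 0).p.2 := by
  intro k hk
  induction k with
  | zero => rfl
  | succ k ih =>
    obtain ⟨a, ha, ha'⟩ := hf.meet_succ k
    rw [← (h (k + 1) hk).snd_eq ha', ← ih (by omega)]
    exact (h k (by omega)).snd_eq ha

end IsCycleRealization

theorem ZMod.add_natCast_ne_add_natCast {n : ℕ} (v : ZMod n) {a b : ℕ} (hab : a < b)
    (hba : b < a + n) : v + a ≠ v + b := by
  obtain ⟨k, rfl⟩ := Nat.exists_eq_add_of_lt hab
  intro h
  have hk : ((k + 1 : ℕ) : ZMod n) = 0 := by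
    push_cast at h ⊢
    linear_combination -h
  rw [ZMod.natCast_eq_zero_iff] at hk
  exact absurd (Nat.le_of_dvd (by omega) hk) (by omega)

theorem ZMod.add_natCast_pred {n : ℕ} [NeZero n] (v : ZMod n) :
    v + ((n - 1 : ℕ) : ZMod n) = v - 1 := by
  rw [Nat.cast_sub NeZero.one_le, ZMod.natCast_self, Nat.cast_one, zero_sub, sub_eq_add_neg]

theorem ZMod.exists_and_not_sub_one {n : ℕ} [NeZero n] {P : ZMod n → Prop} {i p : ZMod n}
    (hi : P i) (hp : ¬ P p) : ∃ v, P v ∧ ¬ P (v - 1) := by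
  by_contra! h
  have hback : ∀ k : ℕ, P (i - k) := by
    intro k
    induction k with
    | zero => simpa using hi
    | succ k ih => simpa [sub_sub] using h _ ih
  exact hp (by simpa using hback (i - p).val)

theorem ZMod.exists_forall_lt_and_not {n : ℕ} [NeZero n] {P : ZMod n → Prop} {v : ZMod n}
    (h : ¬ P (v - 1)) : ∃ l : ℕ, (∀ k < l, P (v + k)) ∧ ¬ P (v + l) := by
  classical
  have hex : ∃ l : ℕ, ¬ P (v + l) := ⟨n - 1, by rwa [ZMod.add_natCast_pred]⟩
  exact ⟨Nat.find hex, fun k hk => not_not.1 (Nat.find_min hex hk), Nat.find_spec hex⟩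

section CycleGraph

variable {n : ℕ} {s : ZMod n → IPSeg}

theorem cycleGraph_adj_iff {a b : ZMod n} :
    (CycleGraph n).Adj a b ↔ a ≠ b ∧ (b = a + 1 ∨ a = b + 1) :=
  SimpleGraph.fromRel_adj _ a b

theorem IsIPSEGModel.isCycleRealization (hm : IsIPSEGModel (CycleGraph n) s) (hn : 1 < n)
    (v : ZMod n) : IsCycleRealization n (fun i => s (v + i)) where
  periodic i := by simp
  meet_succ i := by
    have hne : v + i ≠ v + (i + 1 : ℕ) :=
      ZMod.add_natCast_ne_add_natCast v (by omega) (by omega)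
    exact (hm _ _ hne).1 (cycleGraph_adj_iff.2 ⟨hne, Or.inl (by push_cast; ring)⟩)
  not_meet i j hij hji hmeet := by
    obtain ⟨-, hadj⟩ := cycleGraph_adj_iff.1 ((hm _ _ (ZMod.add_natCast_ne_add_natCast v
      (by omega) (by omega))).2 hmeet)
    rcases hadj with h | h
    · exact ZMod.add_natCast_ne_add_natCast v (a := i + 1) (b := j) (by omega) (by omega)
        (by push_cast; rw [h]; ring)
    · exact ZMod.add_natCast_ne_add_natCast v (a := i) (b := j + 1) (by omega) (by omega)
        (by push_cast; rw [h]; ring)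

theorem IsIPSEGModel.exists_isPermutation (hm : IsIPSEGModel (CycleGraph n) s) (hn : 4 ≤ n) :
    ∃ p, (s p).IsPermutation := by
  have : NeZero n := ⟨by omega⟩
  by_contra! hall
  obtain ⟨u, hu⟩ := Finite.exists_max (fun v => (s v).p.1 ⊓ (s v).q.1)
  have hf := hm.isCycleRealization (by omega) (u - 1)
  set f : ℕ → IPSeg := fun i => s (u - 1 + i)
  have hint : ∀ i, (f i).IsInterval := fun i => not_not.1 (hall _)
  have hmax : ∀ i, (f i).p.1 ⊓ (f i).q.1 ≤ (f 1).p.1 ⊓ (f 1).q.1 := by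
    simpa [f] using fun i => hu _
  exact hf.not_meet 0 2 (by omega) (by omega) <| (hint 0).meet_of_le (hint 1) (hint 2)
    (hf.meet_succ 0) (hf.meet_succ 1) (hmax 0) (hmax 2)

variable {v w : ZMod n}

theorem IsIPSEGModel.exists_intArcLen (hm : IsIPSEGModel (CycleGraph n) s) (hn : 1 < n)
    (hv : IntArcStart n s v) :
    ∃ l, 0 < l ∧ IntArcLen n s v l ∧ ∀ k < l, (s (v + k)).p.2 = (s v).p.2 := by
  have : NeZero n := ⟨by omega⟩
  obtain ⟨l, hint, hend⟩ := ZMod.exists_forall_lt_and_not (P := fun u => (s u).IsInterval) hv.2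
  refine ⟨l, Nat.pos_of_ne_zero ?_, ⟨hint, hend⟩, fun k hk => ?_⟩
  · rintro rfl
    exact hend (by simpa using hv.1)
  · simpa using (hm.isCycleRealization hn v).snd_eq_of_isInterval hint k hk

theorem IsIPSEGModel.not_leftOf_of_intArcStart (hm : IsIPSEGModel (CycleGraph n) s)
    (hn : 1 < n) (hvw : v ≠ w) (hv : IntArcStart n s v) (hw : IntArcStart n s w)
    (hline : (s v).p.2 = (s w).p.2) : ¬ (s v).LeftOf (s w) := by
  have : NeZero n := ⟨by omega⟩
  set f : ℕ → IPSeg := fun i => s (v + i)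
  set d := (w - v).val
  have hwd : w = v + d := by simp [d]
  have hd : 0 < d := ZMod.val_pos.2 (sub_ne_zero.2 hvw.symm)
  have hdn : d < n := ZMod.val_lt _
  obtain ⟨l, hl, ⟨hAint, -⟩, hAc⟩ := hm.exists_intArcLen hn hv
  obtain ⟨l', hl', ⟨hBint, hr'⟩, hBc⟩ := hm.exists_intArcLen hn hw
  have hshift : ∀ k : ℕ, s (w + k) = f (d + k) := fun k => by simp [f, hwd, add_assoc]
  have hq : ¬ (f (d - 1)).IsInterval := by
    simpa [f, Nat.cast_sub hd, ← add_sub_assoc, ← hwd] using hw.2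
  have hq' : ¬ (f (n - 1)).IsInterval := by simpa [f, ZMod.add_natCast_pred] using hv.2
  have hA : ∀ k < l, (f k).IsInterval ∧ (f k).p.2 = (s v).p.2 := fun k hk => ⟨hAint k hk, hAc k hk⟩
  have hB : ∀ k, d ≤ k → k < d + l' → (f k).IsInterval ∧ (f k).p.2 = (s v).p.2 := by
    intro k hdk hk
    obtain ⟨j, rfl⟩ := Nat.exists_eq_add_of_le hdk
    rw [← hshift]
    exact ⟨hBint j (by omega), (hBc j (by omega)).trans hline.symm⟩
  have hld : l < d := by
    by_contra! h
    exact hq (hA (d - 1) (by omega)).1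
  have hdl' : d + l' < n := by
    by_contra! h
    exact hq' (hB (n - 1) (by omega) (by omega)).1
  have hr'' : ¬ (f (d + l')).IsInterval := by
    rw [← hshift]
    exact hr'
  have := (hm.isCycleRealization hn v).not_leftOf_of_arcs hl hld hl' hdl' hA hB hq hr''
  simpa [f, ← hwd] using this

theorem IsIPSEGModel.eq_of_intArcStart (hm : IsIPSEGModel (CycleGraph n) s) (hn : 1 < n)
    (hv : IntArcStart n s v) (hw : IntArcStart n s w) (hline : (s v).p.2 = (s w).p.2) :
    v = w := by
  by_contra hvw
  have hd : ¬ ((s v).carrier ∩ (s w).carrier).Nonempty := fun hmeet => by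
    obtain ⟨-, h | h⟩ := cycleGraph_adj_iff.1 ((hm v w hvw).2 hmeet)
    · exact hw.2 (by rw [h, add_sub_cancel_right]; exact hv.1)
    · exact hv.2 (by rw [h, add_sub_cancel_right]; exact hw.1)
  rcases hv.1.leftOf_or_leftOf hw.1 hline hd with h | h
  · exact hm.not_leftOf_of_intArcStart hn hvw hv hw hline h
  · exact hm.not_leftOf_of_intArcStart hn (Ne.symm hvw) hw hv hline.symm h

end CycleGraph

/-- Every IP-SEG model of a chordless cycle `C_n` (`n ≥ 4`) containing at least one
interval segment has either exactly one interval arc, or exactly two interval arcs,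
each lying entirely on one horizontal line, and on different lines. In particular such
a model cannot have two interval arcs on the same horizontal line. -/
theorem ipseg_cycle_interval_arcs (n : ℕ) (hn : 4 ≤ n)
    (s : ZMod n → IPSeg) (hm : IsIPSEGModel (CycleGraph n) s)
    (hint : ∃ v : ZMod n, (s v).IsInterval) :
    (∃! v : ZMod n, IntArcStart n s v) ∨
    (∃ (v w : ZMod n) (lv lw : ℕ), v ≠ w ∧
      IntArcStart n s v ∧ IntArcLen n s v lv ∧
      IntArcStart n s w ∧ IntArcLen n s w lw ∧
      (∀ u : ZMod n, IntArcStart n s u → u = v ∨ u = w) ∧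
      (∀ k : ℕ, k < lv → (s (v + (k : ZMod n))).p.2 = (s v).p.2) ∧
      (∀ k : ℕ, k < lw → (s (w + (k : ZMod n))).p.2 = (s w).p.2) ∧
      (s v).p.2 ≠ (s w).p.2) := by
  have : NeZero n := ⟨by omega⟩
  obtain ⟨i, hi⟩ := hint
  obtain ⟨p, hp⟩ := hm.exists_isPermutation hn
  obtain ⟨v, hv⟩ := ZMod.exists_and_not_sub_one (P := fun u => (s u).IsInterval) hi hp
  by_cases h : ∃ w, IntArcStart n s w ∧ w ≠ v
  · obtain ⟨w, hw, hwv⟩ := h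
    have hline : (s v).p.2 ≠ (s w).p.2 := fun h =>
      hwv (hm.eq_of_intArcStart (by omega) hw hv h.symm)
    obtain ⟨lv, -, hlv, hcv⟩ := hm.exists_intArcLen (by omega) hv
    obtain ⟨lw, -, hlw, hcw⟩ := hm.exists_intArcLen (by omega) hw
    refine Or.inr ⟨v, w, lv, lw, hwv.symm, hv, hlv, hw, hlw, fun u hu => ?_, hcv, hcw, hline⟩
    have : (s u).p.2 = (s v).p.2 ∨ (s u).p.2 = (s w).p.2 := by
      grind [(s u).hp, (s v).hp, (s w).hp]
    exact this.imp (hm.eq_of_intArcStart (by omega) hu hv) (hm.eq_of_intArcStart (by omega) hu hw)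
  · exact Or.inl ⟨v, hv, fun u hu => by_contra fun hne => h ⟨u, hu, hne⟩⟩
end

section
/- The graph G₇ is not an IP-SEG* graph, i.e., G₇ admits no IP-SEG* model. -/
/-- The graph `Gₙ` on `3n` vertices: a chordless cycle on the vertices `(i, 0)`
(`i ∈ ZMod n`), together with a pendant vertex `(i, 1)` attached to `(i, 0)` and a
pendant vertex `(i, 2)` attached to `(i, 1)`, for each `i`. -/
def GGraph (n : ℕ) : SimpleGraph (ZMod n × Fin 3) :=
  SimpleGraph.fromRel (fun x y =>
    (x.2 = 0 ∧ y.2 = 0 ∧ y.1 = x.1 + 1) ∨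
    (x.2 = 0 ∧ y.2 = 1 ∧ y.1 = x.1) ∨
    (x.2 = 1 ∧ y.2 = 2 ∧ y.1 = x.1))


/-!
All interval segments lie on one line `L`, so every vertex leaves a trace on `L`: an interval,
or the foot of a permutation segment. Two vertices are adjacent iff their traces meet, or both
are permutation segments whose feet on `L` and heads on the other line come in opposite orders.

An interval model has no chordless cycle of length at least four, so some edge of the cycle
`v₀ … v₆` is not flat (its traces are disjoint) and is realised by two crossing permutation
segments. After rotating and reflecting the cycle, `v₆v₀` is such an edge and `v₀` has the
leftmost foot among the ends of non-flat edges. Let `v_k v_{k+1}` be the first non-flat edge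
after `v₀`. A chain of overlapping traces cannot jump over a foot, so for `1 ≤ k ≤ 4` the feet
of `v₀` and `v_k` lie left of those of `v₆` and `v_{k+1}`, and the heads of the two crossing
pairs then force a chord. For `k = 5`, `v₆` lies right of the whole path `v₀ … v₅`, and the
mirror image reduces to `k = 0`. For `k = 0` and `k = 6`, the vertex `v₃` ends up strictly
inside the triangle cut out by the segments of `v₀` and `v₆`. Nothing there may touch these
two segments, so `v₂, v₃, v₄, w₃` are intervals, and with `w₂, w₄, z₃` they would form an
interval model of the subdivided claw, which does not exist.
-/

section Segments

open Set

theorem zero_mem_segment_iff_mul_nonpos {a b : ℝ} :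
    (0 : ℝ) ∈ segment ℝ a b ↔ a * b ≤ 0 := by
  rw [segment_eq_uIcc, mem_uIcc, mul_nonpos_iff]
  tauto

theorem segment_horizontal_inter_nonempty_iff {c x₁ x₂ x₃ x₄ : ℝ} (h₁₂ : x₁ ≤ x₂)
    (h₃₄ : x₃ ≤ x₄) :
    (segment ℝ (x₁, c) (x₂, c) ∩ segment ℝ (x₃, c) (x₄, c)).Nonempty ↔
      x₁ ≤ x₄ ∧ x₃ ≤ x₂ := by
  rw [← Prod.image_mk_segment_left, ← Prod.image_mk_segment_left,
    ← image_inter (Prod.mk_left_injective c), image_nonempty, segment_eq_Icc h₁₂,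
    segment_eq_Icc h₃₄, Icc_inter_Icc, nonempty_Icc, sup_le_iff, le_inf_iff, le_inf_iff]
  tauto

theorem eq_of_mem_segment_of_snd_eq {c c' f h : ℝ} {p : ℝ × ℝ} (hc : c ≠ c')
    (hp : p ∈ segment ℝ (f, c) (h, c')) (hpc : p.2 = c) : p = (f, c) := by
  obtain ⟨a, b, -, -, hab, rfl⟩ := hp
  have hb : b = 0 := by
    have : b * (c' - c) = 0 := by simp at hpc; linear_combination hpc - c * hab
    exact (mul_eq_zero.1 this).resolve_right (sub_ne_zero.2 hc.symm)
  obtain rfl : a = 1 := by linarith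
  simp [hb]

theorem segment_horizontal_inter_transversal_nonempty_iff {c c' x₁ x₂ f h : ℝ} (hc : c ≠ c')
    (h₁₂ : x₁ ≤ x₂) :
    (segment ℝ (x₁, c) (x₂, c) ∩ segment ℝ (f, c) (h, c')).Nonempty ↔ x₁ ≤ f ∧ f ≤ x₂ := by
  rw [← mem_Icc, ← segment_eq_Icc h₁₂]
  constructor
  · rintro ⟨p, hp₁, hp₂⟩
    rw [← Prod.image_mk_segment_left] at hp₁
    obtain ⟨x, hx, rfl⟩ := hp₁
    cases eq_of_mem_segment_of_snd_eq hc hp₂ rfl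
    exact hx
  · intro hf
    exact ⟨(f, c), Prod.image_mk_segment_left (𝕜 := ℝ) x₁ x₂ c ▸ mem_image_of_mem _ hf,
      left_mem_segment ℝ _ _⟩

theorem segment_transversal_inter_nonempty_iff {c c' f₁ h₁ f₂ h₂ : ℝ} (hc : c ≠ c') :
    (segment ℝ (f₁, c) (h₁, c') ∩ segment ℝ (f₂, c) (h₂, c')).Nonempty ↔
      (f₁ - f₂) * (h₁ - h₂) ≤ 0 := by
  rw [← zero_mem_segment_iff_mul_nonpos]
  constructor
  · rintro ⟨p, ⟨a, b, ha, hb, hab, rfl⟩, ⟨a', b', -, -, hab', hp⟩⟩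
    obtain ⟨h₁p, h₂p⟩ := Prod.ext_iff.1 hp
    simp only [Prod.smul_mk, Prod.mk_add_mk, smul_eq_mul] at h₁p h₂p
    obtain rfl : b' = b := by
      have : (b' - b) * (c' - c) = 0 := by linear_combination h₂p - c * hab' + c * hab
      exact sub_eq_zero.1 ((mul_eq_zero.1 this).resolve_right (sub_ne_zero.2 hc.symm))
    obtain rfl : a' = a := by linarith
    exact ⟨a', b', ha, hb, hab, by simp only [smul_eq_mul]; linear_combination -h₁p⟩
  · rintro ⟨a, b, ha, hb, hab, h0⟩
    refine ⟨a • (f₁, c) + b • (h₁, c'), ⟨a, b, ha, hb, hab, rfl⟩, a, b, ha, hb, hab, ?_⟩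
    simp only [smul_eq_mul] at h0
    simp only [Prod.smul_mk, Prod.mk_add_mk, smul_eq_mul, Prod.mk.injEq, and_true]
    linear_combination -h0

end Segments

/-- The shadow of an IP-SEG* model on the line `L` carrying all interval segments: the trace of
`v` on `L` is `[lo v, hi v]`, a single point (the foot) when `v` is a permutation segment, whose
other end then has abscissa `head v`. -/
structure TraceModel {V : Type*} (G : SimpleGraph V) where
  IsPerm : V → Prop
  lo : V → ℝ
  hi : V → ℝ
  head : V → ℝ
  lo_le_hi (v : V) : lo v ≤ hi v
  lo_eq_hi {v : V} : IsPerm v → lo v = hi v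
  adj_iff {u v : V} : u ≠ v → (G.Adj u v ↔ (lo u ≤ hi v ∧ lo v ≤ hi u) ∨
    (IsPerm u ∧ IsPerm v ∧ (lo u - lo v) * (head u - head v) ≤ 0))

theorem IPSeg.exists_carrier_eq (s : IPSeg) {c : ℝ} (hc : c = 1 ∨ c = 2)
    (hs : s.IsInterval → s.p.2 = c) :
    ∃ lo hi head : ℝ, lo ≤ hi ∧ (s.IsInterval → s.carrier = segment ℝ (lo, c) (hi, c)) ∧
      (¬ s.IsInterval → lo = hi ∧ s.carrier = segment ℝ (lo, c) (head, 3 - c)) := by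
  have other : ∀ y : ℝ, (y = 1 ∨ y = 2) → y ≠ c → y = 3 - c := by
    rintro y (rfl | rfl) hy <;> rcases hc with rfl | rfl <;>
      first | exact absurd rfl hy | norm_num
  by_cases hI : s.IsInterval
  · have hp : s.p = (s.p.1, c) := Prod.ext rfl (hs hI)
    have hq : s.q = (s.q.1, c) := Prod.ext rfl (hI ▸ hs hI)
    refine ⟨min s.p.1 s.q.1, max s.p.1 s.q.1, 0, min_le_max, fun _ => ?_, fun h => absurd hI h⟩
    rw [IPSeg.carrier, hp, hq]
    rcases le_total s.p.1 s.q.1 with h | h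
    · simp [h]
    · simp [h, segment_symm]
  · by_cases hpc : s.p.2 = c
    · have hq : s.q = (s.q.1, 3 - c) :=
        Prod.ext rfl (other _ s.hq fun h => hI (hpc.trans h.symm))
      refine ⟨s.p.1, s.p.1, s.q.1, le_rfl, fun h => absurd h hI, fun _ => ⟨rfl, ?_⟩⟩
      rw [IPSeg.carrier, hq, show s.p = (s.p.1, c) from Prod.ext rfl hpc]
    · have hp : s.p = (s.p.1, 3 - c) := Prod.ext rfl (other _ s.hp hpc)
      have hq : s.q = (s.q.1, c) := by
        refine Prod.ext rfl ?_
        by_contra hqc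
        exact hI ((other _ s.hp hpc).trans (other _ s.hq hqc).symm)
      refine ⟨s.q.1, s.q.1, s.p.1, le_rfl, fun h => absurd h hI, fun _ => ⟨rfl, ?_⟩⟩
      rw [IPSeg.carrier, segment_symm, hp, hq]

theorem IsIPSEGStarModel.nonempty_traceModel {V : Type*} {G : SimpleGraph V} {s : V → IPSeg}
    (hs : IsIPSEGStarModel G s) : Nonempty (TraceModel G) := by
  obtain ⟨hG, c, hc, hint⟩ := hs
  have hc' : c ≠ 3 - c := by rcases hc with rfl | rfl <;> norm_num
  choose lo hi head hle hI hP using fun v => (s v).exists_carrier_eq hc (hint v)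
  refine ⟨⟨fun v => ¬ (s v).IsInterval, lo, hi, head, hle, fun hv => (hP _ hv).1, ?_⟩⟩
  intro u v huv
  rw [hG u v huv]
  by_cases hu : (s u).IsInterval <;> by_cases hv : (s v).IsInterval
  · rw [hI u hu, hI v hv, segment_horizontal_inter_nonempty_iff (hle u) (hle v)]
    simp [hu]
  · rw [hI u hu, (hP v hv).2, segment_horizontal_inter_transversal_nonempty_iff hc' (hle u),
      ← (hP v hv).1]
    simp [hu]
  · rw [(hP u hu).2, hI v hv, Set.inter_comm,
      segment_horizontal_inter_transversal_nonempty_iff hc' (hle v), ← (hP u hu).1]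
    simp [hv, and_comm]
  · rw [(hP u hu).2, (hP v hv).2, segment_transversal_inter_nonempty_iff hc', ← (hP u hu).1,
      ← (hP v hv).1]
    simp only [hu, hv, not_false_eq_true, true_and]
    refine ⟨Or.inr, ?_⟩
    rintro (⟨h₁, h₂⟩ | h)
    · rw [le_antisymm h₁ h₂, sub_self, zero_mul]
    · exact h

namespace TraceModel

variable {V V' : Type*} {G : SimpleGraph V} {G' : SimpleGraph V'} (M : TraceModel G)
  {u v w p q : V}

def Overlap (u v : V) : Prop := M.lo u ≤ M.hi v ∧ M.lo v ≤ M.hi u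

def Inside (p q u : V) : Prop := M.lo p < M.lo u ∧ M.hi u < M.lo q

def comap (f : G' ↪g G) : TraceModel G' where
  IsPerm v := M.IsPerm (f v)
  lo v := M.lo (f v)
  hi v := M.hi (f v)
  head v := M.head (f v)
  lo_le_hi v := M.lo_le_hi (f v)
  lo_eq_hi h := M.lo_eq_hi h
  adj_iff huv := by rw [← f.map_adj_iff]; exact M.adj_iff (f.injective.ne huv)

def mirror : TraceModel G where
  IsPerm := M.IsPerm
  lo v := -M.hi v
  hi v := -M.lo v
  head v := -M.head v
  lo_le_hi v := neg_le_neg (M.lo_le_hi v)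
  lo_eq_hi h := by rw [M.lo_eq_hi h]
  adj_iff {u v} huv := by
    rw [M.adj_iff huv]
    refine or_congr (by constructor <;> rintro ⟨h₁, h₂⟩ <;> constructor <;> linarith) ?_
    refine and_congr_right fun hu => and_congr_right fun hv => ?_
    rw [← M.lo_eq_hi hu, ← M.lo_eq_hi hv]
    constructor <;> intro h <;> linarith

theorem overlap_comm : M.Overlap u v ↔ M.Overlap v u := and_comm

theorem mirror_overlap : M.mirror.Overlap u v ↔ M.Overlap u v := by
  unfold Overlap mirror
  constructor <;> rintro ⟨h₁, h₂⟩ <;> constructor <;> linarith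

theorem overlap_iff_of_isPerm (hu : M.IsPerm u) (hv : M.IsPerm v) :
    M.Overlap u v ↔ M.lo u = M.lo v := by
  rw [Overlap, ← M.lo_eq_hi hu, ← M.lo_eq_hi hv, le_antisymm_iff]

theorem not_overlap_of_not_adj (huv : u ≠ v) (h : ¬ G.Adj u v) : ¬ M.Overlap u v :=
  fun ho => h ((M.adj_iff huv).2 (Or.inl ho))

theorem overlap_of_adj (h : G.Adj u v) (hu : ¬ M.IsPerm u ∨ ¬ M.IsPerm v) :
    M.Overlap u v := by
  rcases (M.adj_iff h.ne).1 h with h | ⟨hu', hv', -⟩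
  · exact h
  · exact absurd ⟨hu', hv'⟩ (not_and_or.2 hu)

theorem isPerm_of_adj_of_not_overlap (h : G.Adj u v) (ho : ¬ M.Overlap u v) :
    M.IsPerm u ∧ M.IsPerm v := by
  by_contra hp
  exact ho (M.overlap_of_adj h (not_and_or.1 hp))

theorem adj_iff_of_isPerm (hu : M.IsPerm u) (hv : M.IsPerm v) (huv : u ≠ v) :
    G.Adj u v ↔ (M.lo u - M.lo v) * (M.head u - M.head v) ≤ 0 := by
  rw [M.adj_iff huv, ← M.lo_eq_hi hu, ← M.lo_eq_hi hv]
  constructor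
  · rintro (⟨h₁, h₂⟩ | ⟨-, -, h⟩)
    · rw [le_antisymm h₁ h₂, sub_self, zero_mul]
    · exact h
  · exact fun h => Or.inr ⟨hu, hv, h⟩

theorem head_le_of_adj (hu : M.IsPerm u) (hv : M.IsPerm v) (h : G.Adj u v)
    (hlt : M.lo u < M.lo v) : M.head v ≤ M.head u := by
  have := (M.adj_iff_of_isPerm hu hv h.ne).1 h
  nlinarith

theorem head_lt_of_not_adj (hu : M.IsPerm u) (hv : M.IsPerm v) (huv : u ≠ v)
    (h : ¬ G.Adj u v) (hlt : M.lo u < M.lo v) : M.head u < M.head v := by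
  rw [M.adj_iff_of_isPerm hu hv huv, not_le] at h
  nlinarith

theorem lo_ne_of_not_adj (hu : M.IsPerm u) (hv : M.IsPerm v) (huv : u ≠ v)
    (h : ¬ G.Adj u v) : M.lo u ≠ M.lo v := by
  rw [M.adj_iff_of_isPerm hu hv huv, not_le] at h
  intro he
  rw [he, sub_self, zero_mul] at h
  exact h.false

theorem exists_overlap_of_forall_overlap_succ {n : ℕ} [NeZero n] (s : ZMod n → V)
    (hs : ∀ i, M.Overlap (s i) (s (i + 1))) : ∃ i, M.Overlap (s (i - 1)) (s (i + 1)) := by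
  obtain ⟨i, hi⟩ := Finite.exists_max fun i => M.lo (s i)
  have h := hs (i - 1)
  rw [sub_add_cancel] at h
  exact ⟨i, (hi _).trans (hs i).1, (hi _).trans h.2⟩

theorem hi_lt_lo_of_chain (hq : M.IsPerm q) {s : ℕ → V} {n : ℕ}
    (hs : ∀ i < n, M.Overlap (s i) (s (i + 1))) (hsq : ∀ i ≤ n, ¬ M.Overlap (s i) q)
    (h0 : M.lo (s 0) ≤ M.lo q) : M.hi (s n) < M.lo q := by
  rw [M.lo_eq_hi hq] at h0 ⊢
  induction n with
  | zero => exact lt_of_not_ge fun h => hsq 0 le_rfl ⟨h0, (M.lo_eq_hi hq).trans_le h⟩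
  | succ n ih =>
    have hn := ih (fun i hi => hs i (by omega)) fun i hi => hsq i (by omega)
    refine lt_of_not_ge fun h => hsq (n + 1) le_rfl ⟨?_, (M.lo_eq_hi hq).trans_le h⟩
    linarith [(hs n n.lt_succ_self).2]

theorem hi_lt_lo_of_chain' (hq : M.IsPerm q) {s : ℕ → V} {n : ℕ}
    (hs : ∀ i < n, M.Overlap (s i) (s (i + 1))) (hsq : ∀ i ≤ n, ¬ M.Overlap (s i) q)
    (h0 : M.lo q ≤ M.hi (s 0)) : M.hi q < M.lo (s n) :=
  neg_lt_neg_iff.1 <| M.mirror.hi_lt_lo_of_chain hq (fun i hi => M.mirror_overlap.2 (hs i hi))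
    (fun i hi => mt M.mirror_overlap.1 (hsq i hi)) (neg_le_neg (M.lo_eq_hi hq ▸ h0))

theorem adj_of_adj_of_adj (hu : M.IsPerm u) (hv : M.IsPerm v) (hw : M.IsPerm w)
    (huv : G.Adj u v) (hvw : G.Adj v w) (h₁ : M.lo u < M.lo v) (h₂ : M.lo v < M.lo w) :
    G.Adj u w := by
  have := M.head_le_of_adj hu hv huv h₁
  have := M.head_le_of_adj hv hw hvw h₂
  rw [M.adj_iff_of_isPerm hu hw (ne_of_apply_ne M.lo (h₁.trans h₂).ne)]
  nlinarith

theorem adj_or_adj_of_lo_lt {r r' x x' : V} (hr : M.IsPerm r) (hr' : M.IsPerm r')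
    (hx : M.IsPerm x) (hx' : M.IsPerm x') (hrx : G.Adj r x) (hrx' : G.Adj r' x')
    (h₁ : M.lo r < M.lo x) (h₂ : M.lo r < M.lo x') (h₃ : M.lo r' < M.lo x)
    (h₄ : M.lo r' < M.lo x') : G.Adj r x' ∨ G.Adj r' x := by
  by_contra! h
  have := M.head_le_of_adj hr hx hrx h₁
  have := M.head_le_of_adj hr' hx' hrx' h₄
  have := M.head_lt_of_not_adj hr hx' (ne_of_apply_ne M.lo h₂.ne) h.1 h₂
  have := M.head_lt_of_not_adj hr' hx (ne_of_apply_ne M.lo h₃.ne) h.2 h₃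
  linarith

/-- Each leg `a a'` sticks out of the centre `o` on some side, since `a'` meets `a` but not `o`;
two legs sticking out on the same side meet. -/
theorem false_of_claw {o a b c a' b' c' : V}
    (ha : M.Overlap o a) (hb : M.Overlap o b) (hc : M.Overlap o c)
    (ha' : M.Overlap a a') (hb' : M.Overlap b b') (hc' : M.Overlap c c')
    (hoa' : ¬ M.Overlap o a') (hob' : ¬ M.Overlap o b') (hoc' : ¬ M.Overlap o c')
    (hab : ¬ M.Overlap a b) (hac : ¬ M.Overlap a c) (hbc : ¬ M.Overlap b c) : False := by
  have side {x x'} (hx : M.Overlap x x') (hox : ¬ M.Overlap o x') :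
      M.lo x < M.lo o ∨ M.hi o < M.hi x := by
    by_contra! ⟨h₁, h₂⟩
    exact hox ⟨by linarith [hx.1], by linarith [hx.2]⟩
  have left {x y} (hx : M.Overlap o x) (hy : M.Overlap o y) (h₁ : M.lo x < M.lo o)
      (h₂ : M.lo y < M.lo o) : M.Overlap x y := ⟨by linarith [hy.1], by linarith [hx.1]⟩
  have right {x y} (hx : M.Overlap o x) (hy : M.Overlap o y) (h₁ : M.hi o < M.hi x)
      (h₂ : M.hi o < M.hi y) : M.Overlap x y := ⟨by linarith [hx.2], by linarith [hy.2]⟩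
  rcases side ha' hoa' with hA | hA <;> rcases side hb' hob' with hB | hB
  · exact hab (left ha hb hA hB)
  · rcases side hc' hoc' with hC | hC
    · exact hac (left ha hc hA hC)
    · exact hbc (right hb hc hB hC)
  · rcases side hc' hoc' with hC | hC
    · exact hbc (left hb hc hB hC)
    · exact hac (right ha hc hA hC)
  · exact hab (right ha hb hA hB)

theorem not_isPerm_of_inside (hp : M.IsPerm p) (hq : M.IsPerm q) (hpq : G.Adj p q)
    (hu : M.Inside p q u) (hup : ¬ G.Adj u p) (huq : ¬ G.Adj u q) : ¬ M.IsPerm u := by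
  intro hu'
  obtain ⟨h₁, h₂⟩ := hu
  rw [← M.lo_eq_hi hu'] at h₂
  have := M.head_lt_of_not_adj hp hu' (ne_of_apply_ne M.lo h₁.ne) (fun h => hup h.symm) h₁
  have := M.head_lt_of_not_adj hu' hq (ne_of_apply_ne M.lo h₂.ne) huq h₂
  have := M.head_le_of_adj hp hq hpq (h₁.trans h₂)
  linarith

theorem inside_of_overlap (hp : M.IsPerm p) (hq : M.IsPerm q) (hu : M.Inside p q u)
    (huw : M.Overlap u w) (hwp : ¬ M.Overlap w p) (hwq : ¬ M.Overlap w q) :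
    M.Inside p q w := by
  rw [Overlap, ← M.lo_eq_hi hp] at hwp
  rw [Overlap, ← M.lo_eq_hi hq] at hwq
  exact ⟨lt_of_not_ge fun h => hwp ⟨h, by linarith [hu.1, huw.1]⟩,
    lt_of_not_ge fun h => hwq ⟨by linarith [hu.2, huw.2], h⟩⟩

theorem inside_of_adj (hp : M.IsPerm p) (hq : M.IsPerm q) (hpq : G.Adj p q)
    (hu : M.Inside p q u) (hup : ¬ G.Adj u p) (huq : ¬ G.Adj u q) (huw : G.Adj u w)
    (hwp : ¬ G.Adj w p) (hwq : ¬ G.Adj w q) : M.Inside p q w :=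
  M.inside_of_overlap hp hq hu
    (M.overlap_of_adj huw (Or.inl (M.not_isPerm_of_inside hp hq hpq hu hup huq)))
    (M.not_overlap_of_not_adj (by rintro rfl; exact hup huw) hwp)
    (M.not_overlap_of_not_adj (by rintro rfl; exact huq huw) hwq)

end TraceModel

namespace GGraph

instance (n : ℕ) : DecidableRel (GGraph n).Adj := fun _ _ =>
  decidable_of_iff' _ (SimpleGraph.fromRel_adj _ _ _)

variable {n : ℕ}

/-- The vertices `vᵢ`, `wᵢ`, `zᵢ` of `Gₙ`. -/
abbrev cyc (i : ZMod n) : ZMod n × Fin 3 := (i, 0)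
abbrev pend (i : ZMod n) : ZMod n × Fin 3 := (i, 1)
abbrev tip (i : ZMod n) : ZMod n × Fin 3 := (i, 2)

def rotate (r : ZMod n) : GGraph n ≃g GGraph n where
  toFun x := (x.1 + r, x.2)
  invFun x := (x.1 - r, x.2)
  left_inv x := by simp
  right_inv x := by simp
  map_rel_iff' {x y} := by
    simp only [GGraph, SimpleGraph.fromRel_adj, Equiv.coe_fn_mk, ne_eq, Prod.ext_iff,
      add_left_inj, add_right_comm _ r 1]

def reflect (r : ZMod n) : GGraph n ≃g GGraph n where
  toFun x := (r - x.1, x.2)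
  invFun x := (r - x.1, x.2)
  left_inv x := by simp
  right_inv x := by simp
  map_rel_iff' := by
    have key (a b : ZMod n) : r - a = r - b + 1 ↔ b = a + 1 := by
      constructor <;> intro h <;> linear_combination h
    simp only [GGraph, SimpleGraph.fromRel_adj, Equiv.coe_fn_mk, ne_eq, Prod.ext_iff,
      sub_right_inj, key]
    grind

theorem adj_cyc_add_one : ∀ i : ZMod 7, (GGraph 7).Adj (cyc i) (cyc (i + 1)) := by
  decide

theorem cyc_ne_and_not_adj {i j : ℕ} (h₁ : i + 2 ≤ j) (h₂ : j ≤ i + 5) :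
    cyc (i : ZMod 7) ≠ cyc (j : ZMod 7) ∧
      ¬ (GGraph 7).Adj (cyc (i : ZMod 7)) (cyc (j : ZMod 7)) := by
  obtain ⟨d, rfl⟩ := Nat.exists_eq_add_of_le h₁
  have hd : d ≤ 3 := by omega
  push_cast
  generalize (i : ZMod 7) = x
  revert x
  interval_cases d <;> decide

end GGraph

namespace TraceModel

open GGraph

variable {n : ℕ} (M : TraceModel (GGraph n))

def Flat (i : ZMod n) : Prop := M.Overlap (cyc i) (cyc (i + 1))

theorem not_overlap_cyc {i j : ZMod n} (hij : i ≠ j) (h₁ : j ≠ i + 1) (h₂ : i ≠ j + 1) :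
    ¬ M.Overlap (cyc i) (cyc j) :=
  M.not_overlap_of_not_adj (by simpa using hij) (by simp [GGraph, h₁, h₂])

theorem flat_comap_rotate (r i : ZMod n) :
    (M.comap (rotate r).toEmbedding).Flat i ↔ M.Flat (i + r) := by
  simp [Flat, comap, Overlap, rotate, add_right_comm]

theorem flat_comap_reflect (r i : ZMod n) :
    (M.comap (reflect r).toEmbedding).Flat i ↔ M.Flat (r - i - 1) := by
  rw [Flat, Flat, sub_add_cancel]
  simp [comap, Overlap, reflect, and_comm, sub_sub]

theorem mirror_flat (i : ZMod n) : M.mirror.Flat i ↔ M.Flat i := M.mirror_overlap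

theorem hi_lt_lo_of_flat {j : ZMod n} (hj : M.IsPerm (cyc j)) {m : ℕ}
    (hflat : ∀ i < m, M.Flat i) (hfar : ∀ i ≤ m, ¬ M.Overlap (cyc (i : ZMod n)) (cyc j))
    (h0 : M.lo (cyc 0) ≤ M.lo (cyc j)) : M.hi (cyc (m : ZMod n)) < M.lo (cyc j) :=
  M.hi_lt_lo_of_chain hj (s := fun i : ℕ => cyc (i : ZMod n))
    (fun i hi => by simpa [Flat] using hflat i hi) hfar (by simpa using h0)

section Seven

variable (M : TraceModel (GGraph 7))

theorem isPerm_of_not_flat {i : ZMod 7} (h : ¬ M.Flat i) :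
    M.IsPerm (cyc i) ∧ M.IsPerm (cyc (i + 1)) :=
  M.isPerm_of_adj_of_not_overlap (adj_cyc_add_one i) h

theorem not_overlap_cyc_natCast {i j : ℕ} (h₁ : i + 2 ≤ j) (h₂ : j ≤ i + 5) :
    ¬ M.Overlap (cyc (i : ZMod 7)) (cyc (j : ZMod 7)) :=
  M.not_overlap_of_not_adj (cyc_ne_and_not_adj h₁ h₂).1 (cyc_ne_and_not_adj h₁ h₂).2

theorem exists_not_flat : ∃ i, ¬ M.Flat i := by
  by_contra! h
  obtain ⟨i, hi⟩ := M.exists_overlap_of_forall_overlap_succ (fun i : ZMod 7 => cyc i) h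
  have hne : ∀ i : ZMod 7, i - 1 ≠ i + 1 ∧ i + 1 ≠ i - 1 + 1 ∧ i - 1 ≠ i + 1 + 1 := by decide
  exact M.not_overlap_cyc (hne i).1 (hne i).2.1 (hne i).2.2 hi

def LeftOfCrossings (j : ZMod 7) : Prop :=
  ∀ i, ¬ M.Flat i → M.lo (cyc j) ≤ M.lo (cyc i) ∧ M.lo (cyc j) ≤ M.lo (cyc (i + 1))

structure IsNormalized : Prop where
  not_flat_six : ¬ M.Flat 6
  leftOfCrossings : M.LeftOfCrossings 0

variable {M}

theorem IsNormalized.not_overlap_zero_six (hM : M.IsNormalized) :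
    ¬ M.Overlap (cyc 0) (cyc 6) :=
  fun h => hM.not_flat_six ((M.overlap_comm).1 h)

theorem isNormalized_comap_rotate {j : ZMod 7} (hj : ¬ M.Flat (j - 1))
    (h : M.LeftOfCrossings j) : (M.comap (rotate j).toEmbedding).IsNormalized := by
  have h7 : (7 : ZMod 7) = 0 := by decide
  refine ⟨by rwa [flat_comap_rotate, show 6 + j = j - 1 by linear_combination h7],
    fun i hi => ?_⟩
  rw [flat_comap_rotate] at hi
  change M.lo (cyc (0 + j)) ≤ M.lo (cyc (i + j)) ∧ M.lo (cyc (0 + j)) ≤ M.lo (cyc (i + 1 + j))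
  rw [zero_add, add_right_comm]
  exact h _ hi

theorem isNormalized_comap_reflect {j : ZMod 7} (hj : ¬ M.Flat j) (h : M.LeftOfCrossings j) :
    (M.comap (reflect j).toEmbedding).IsNormalized := by
  have h7 : (7 : ZMod 7) = 0 := by decide
  refine ⟨by rwa [flat_comap_reflect, show j - 6 - 1 = j by linear_combination -h7],
    fun i hi => ?_⟩
  rw [flat_comap_reflect] at hi
  change M.lo (cyc (j - 0)) ≤ M.lo (cyc (j - i)) ∧ M.lo (cyc (j - 0)) ≤ M.lo (cyc (j - (i + 1)))
  rw [sub_zero, ← sub_sub, and_comm]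
  simpa using h _ hi

variable (M)

theorem exists_isNormalized :
    ∃ f : GGraph 7 ≃g GGraph 7, (M.comap f.toEmbedding).IsNormalized := by
  classical
  obtain ⟨i₀, hi₀⟩ := M.exists_not_flat
  let E := Finset.univ.filter fun j : ZMod 7 => ¬ M.Flat j ∨ ¬ M.Flat (j - 1)
  obtain ⟨j, hjE, hmin⟩ := E.exists_min_image (fun j => M.lo (cyc j)) ⟨i₀, by simp [E, hi₀]⟩
  have hj : M.LeftOfCrossings j := fun i hi =>
    ⟨hmin i (by simp [E, hi]), hmin (i + 1) (by simp [E, hi])⟩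
  rcases (Finset.mem_filter.1 hjE).2 with h | h
  exacts [⟨_, isNormalized_comap_reflect h hj⟩, ⟨_, isNormalized_comap_rotate h hj⟩]

theorem not_inside_three (h6 : ¬ M.Flat 6) : ¬ M.Inside (cyc 0) (cyc 6) (cyc 3) := by
  intro h3
  obtain ⟨hq, hp⟩ : M.IsPerm (cyc 6) ∧ M.IsPerm (cyc 0) := M.isPerm_of_not_flat h6
  have hpq : (GGraph 7).Adj (cyc 0) (cyc 6) := by decide
  have inside {u w} := M.inside_of_adj (u := u) (w := w) hp hq hpq
  have interval {u} := M.not_isPerm_of_inside (u := u) hp hq hpq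
  have overlap {u v} (h : (GGraph 7).Adj u v) (hu : ¬ M.IsPerm u) : M.Overlap u v :=
    M.overlap_of_adj h (Or.inl hu)
  have apart {u v} (h : u ≠ v ∧ ¬ (GGraph 7).Adj u v) : ¬ M.Overlap u v :=
    M.not_overlap_of_not_adj h.1 h.2
  have h2 : M.Inside (cyc 0) (cyc 6) (cyc 2) :=
    inside h3 (by decide) (by decide) (by decide) (by decide) (by decide)
  have h4 : M.Inside (cyc 0) (cyc 6) (cyc 4) :=
    inside h3 (by decide) (by decide) (by decide) (by decide) (by decide)
  have hw : M.Inside (cyc 0) (cyc 6) (pend 3) :=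
    inside h3 (by decide) (by decide) (by decide) (by decide) (by decide)
  exact M.false_of_claw (o := cyc 3) (a := cyc 2) (b := cyc 4) (c := pend 3) (a' := pend 2)
    (b' := pend 4) (c' := tip 3)
    (overlap (by decide) (interval h3 (by decide) (by decide)))
    (overlap (by decide) (interval h3 (by decide) (by decide)))
    (overlap (by decide) (interval h3 (by decide) (by decide)))
    (overlap (by decide) (interval h2 (by decide) (by decide)))
    (overlap (by decide) (interval h4 (by decide) (by decide)))
    (overlap (by decide) (interval hw (by decide) (by decide)))
    (apart (by decide)) (apart (by decide)) (apart (by decide))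
    (apart (by decide)) (apart (by decide)) (apart (by decide))

theorem false_of_not_flat_zero (hM : M.IsNormalized) (h0 : ¬ M.Flat 0) : False := by
  obtain ⟨hp0, hp1⟩ : M.IsPerm (cyc 0) ∧ M.IsPerm (cyc 1) := M.isPerm_of_not_flat h0
  obtain ⟨hp6, -⟩ := M.isPerm_of_not_flat hM.not_flat_six
  wlog h16 : M.lo (cyc 1) < M.lo (cyc 6) generalizing M
  · have hne := M.lo_ne_of_not_adj hp1 hp6 (by decide) (by decide)
    refine this _ (isNormalized_comap_reflect h0 hM.leftOfCrossings) ?_ hp0 hp6 hp1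
      (lt_of_le_of_ne (not_lt.1 h16) hne.symm)
    rw [flat_comap_reflect]
    exact hM.not_flat_six
  have h01 : M.lo (cyc 0) < M.lo (cyc 1) :=
    lt_of_le_of_ne (hM.leftOfCrossings 0 h0).2 (mt (M.overlap_iff_of_isPerm hp0 hp1).2 h0)
  have h1 : M.Inside (cyc 0) (cyc 6) (cyc 1) := ⟨h01, M.lo_eq_hi hp1 ▸ h16⟩
  by_cases hf1 : M.Flat 1
  · have h2 := M.inside_of_overlap hp0 hp6 h1 hf1
      (M.not_overlap_cyc (by decide) (by decide) (by decide))
      (M.not_overlap_cyc (by decide) (by decide) (by decide))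
    exact M.not_inside_three hM.not_flat_six (M.inside_of_adj hp0 hp6 (by decide) h2
      (by decide) (by decide) (by decide) (by decide) (by decide))
  · obtain ⟨-, hp2⟩ : _ ∧ M.IsPerm (cyc 2) := M.isPerm_of_not_flat hf1
    have h02 : M.lo (cyc 0) < M.lo (cyc 2) := lt_of_le_of_ne (hM.leftOfCrossings 1 hf1).2
      (M.lo_ne_of_not_adj hp0 hp2 (by decide) (by decide))
    have h62 : M.lo (cyc 6) ≤ M.lo (cyc 2) := not_lt.1 fun h =>
      M.not_isPerm_of_inside hp0 hp6 (by decide) ⟨h02, M.lo_eq_hi hp2 ▸ h⟩ (by decide)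
        (by decide) hp2
    exact absurd (M.adj_of_adj_of_adj hp0 hp1 hp2 (by decide) (by decide) h01 (by linarith))
      (by decide)

theorem false_of_flat_run (hM : M.IsNormalized) {k : ℕ} (hk₁ : 1 ≤ k) (hk₄ : k ≤ 4)
    (hflat : ∀ i < k, M.Flat i) (hk : ¬ M.Flat k) : False := by
  obtain ⟨hp6, hp0⟩ : M.IsPerm (cyc 6) ∧ M.IsPerm (cyc 0) := M.isPerm_of_not_flat hM.not_flat_six
  obtain ⟨hpk, hpk'⟩ : M.IsPerm (cyc (k : ZMod 7)) ∧ M.IsPerm (cyc ((k + 1 : ℕ) : ZMod 7)) := by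
    simpa using M.isPerm_of_not_flat hk
  have h06 := hM.not_overlap_zero_six
  have h0k : ¬ M.Overlap (cyc 0) (cyc ((k + 1 : ℕ) : ZMod 7)) := by
    simpa using M.not_overlap_cyc_natCast (i := 0) (j := k + 1) (by omega) (by omega)
  have hk6 : M.hi (cyc (k : ZMod 7)) < M.lo (cyc 6) := by
    refine M.hi_lt_lo_of_flat hp6 hflat (fun i hi => ?_) (hM.leftOfCrossings 6 hM.not_flat_six).1
    rcases Nat.eq_zero_or_pos i with rfl | hi₀
    · simpa using h06
    · simpa using M.not_overlap_cyc_natCast (i := i) (j := 6) (by omega) (by omega)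
  have hkk : M.hi (cyc (k : ZMod 7)) < M.lo (cyc ((k + 1 : ℕ) : ZMod 7)) := by
    refine M.hi_lt_lo_of_flat hpk' hflat (fun i hi => ?_)
      (by simpa using (hM.leftOfCrossings k hk).2)
    rcases hi.lt_or_eq with hi | rfl
    · exact M.not_overlap_cyc_natCast (by omega) (by omega)
    · simpa [Flat] using hk
  rw [← M.lo_eq_hi hpk] at hk6 hkk
  rcases M.adj_or_adj_of_lo_lt hp0 hpk hp6 hpk' (by decide) (by simpa using adj_cyc_add_one k)
      (lt_of_le_of_ne (hM.leftOfCrossings 6 hM.not_flat_six).1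
        (mt (M.overlap_iff_of_isPerm hp0 hp6).2 h06))
      (lt_of_le_of_ne (by simpa using (hM.leftOfCrossings k hk).2)
        (mt (M.overlap_iff_of_isPerm hp0 hpk').2 h0k))
      hk6 hkk with h | h
  · exact absurd h <| by
      simpa using (cyc_ne_and_not_adj (i := 0) (j := k + 1) (by omega) (by omega)).2
  · exact absurd h <| by
      simpa using (cyc_ne_and_not_adj (i := k) (j := 6) (by omega) (by omega)).2

theorem false_of_flat_run_five (hM : M.IsNormalized) (hflat : ∀ i : ℕ, i < 5 → M.Flat i)
    (h5 : ¬ M.Flat 5) : False := by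
  obtain ⟨hp6, hp0⟩ : M.IsPerm (cyc 6) ∧ M.IsPerm (cyc 0) := M.isPerm_of_not_flat hM.not_flat_six
  have h06 : M.lo (cyc 0) ≤ M.lo (cyc 6) := (hM.leftOfCrossings 6 hM.not_flat_six).1
  have h56 : M.hi (cyc 5) < M.lo (cyc 6) := by
    have hfar : ∀ i : ℕ, i ≤ 5 → ¬ M.Overlap (cyc (i : ZMod 7)) (cyc 6) := by
      intro i hi
      rcases Nat.eq_zero_or_pos i with rfl | hi₀
      · simpa using hM.not_overlap_zero_six
      rcases hi.lt_or_eq with hi | rfl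
      · simpa using M.not_overlap_cyc_natCast (i := i) (j := 6) (by omega) (by omega)
      · exact h5
    simpa using M.hi_lt_lo_of_flat hp6 hflat hfar h06
  have hleft : M.mirror.LeftOfCrossings 6 := by
    intro i hi
    rw [mirror_flat] at hi
    obtain rfl | rfl | ⟨m, hm, rfl⟩ :=
      (by decide : ∀ i : ZMod 7, i = 5 ∨ i = 6 ∨ ∃ m : ℕ, m < 5 ∧ (m : ZMod 7) = i) i
    · change -M.hi (cyc 6) ≤ -M.hi (cyc 5) ∧ -M.hi (cyc 6) ≤ -M.hi (cyc 6)
      exact ⟨by linarith [M.lo_eq_hi hp6], le_rfl⟩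
    · change -M.hi (cyc 6) ≤ -M.hi (cyc 6) ∧ -M.hi (cyc 6) ≤ -M.hi (cyc 0)
      exact ⟨le_rfl, by linarith [M.lo_eq_hi hp0, M.lo_eq_hi hp6]⟩
    · exact absurd (hflat m hm) hi
  refine (M.mirror.comap (rotate 6).toEmbedding).false_of_not_flat_zero
    (isNormalized_comap_rotate (by rwa [show (6 : ZMod 7) - 1 = 5 by decide, mirror_flat])
      hleft) ?_
  rw [flat_comap_rotate, mirror_flat]
  exact hM.not_flat_six

theorem false_of_flat_run_six (hM : M.IsNormalized) (hflat : ∀ i : ℕ, i < 6 → M.Flat i) :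
    False := by
  obtain ⟨hp6, hp0⟩ : M.IsPerm (cyc 6) ∧ M.IsPerm (cyc 0) := M.isPerm_of_not_flat hM.not_flat_six
  have h06 := hM.not_overlap_zero_six
  have hlt : M.lo (cyc 0) < M.lo (cyc 6) := lt_of_le_of_ne
    (hM.leftOfCrossings 6 hM.not_flat_six).1 (mt (M.overlap_iff_of_isPerm hp0 hp6).2 h06)
  have hr : M.hi (cyc 3) < M.lo (cyc 6) := by
    have hfar : ∀ i : ℕ, i ≤ 3 → ¬ M.Overlap (cyc (i : ZMod 7)) (cyc 6) := by
      intro i hi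
      rcases Nat.eq_zero_or_pos i with rfl | hi₀
      · simpa using h06
      · simpa using M.not_overlap_cyc_natCast (i := i) (j := 6) (by omega) (by omega)
    simpa using M.hi_lt_lo_of_flat hp6 (fun i hi => hflat i (by omega)) hfar hlt.le
  have hl : M.lo (cyc 0) < M.lo (cyc 3) := by
    let s : ℕ → ZMod 7 × Fin 3 := fun i => cyc ((6 - i : ℕ) : ZMod 7)
    have hs : ∀ i < 3, M.Overlap (s i) (s (i + 1)) := by
      intro i hi
      simp only [s]
      rw [show 6 - i = 5 - i + 1 by omega, show 6 - (i + 1) = 5 - i by omega, overlap_comm]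
      simpa [Flat] using hflat (5 - i) (by omega)
    have hfar : ∀ i ≤ 3, ¬ M.Overlap (s i) (cyc 0) := by
      intro i hi
      rw [overlap_comm]
      rcases Nat.eq_zero_or_pos i with rfl | hi₀
      · simpa [s] using h06
      · simpa using M.not_overlap_cyc_natCast (i := 0) (j := 6 - i) (by omega) (by omega)
    rw [M.lo_eq_hi hp0]
    simpa [s] using M.hi_lt_lo_of_chain' hp0 hs hfar
      (by simpa [s] using hlt.le.trans (M.lo_le_hi _))
  exact M.not_inside_three hM.not_flat_six ⟨hl, hr⟩

theorem false_of_isNormalized (hM : M.IsNormalized) : False := by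
  classical
  have hex : ∃ k : ℕ, ¬ M.Flat k := ⟨6, by simpa using hM.not_flat_six⟩
  obtain ⟨k, hk₆, hk, hflat⟩ : ∃ k : ℕ, k ≤ 6 ∧ ¬ M.Flat k ∧ ∀ i < k, M.Flat i :=
    ⟨Nat.find hex, Nat.find_min' hex (by simpa using hM.not_flat_six), Nat.find_spec hex,
      fun i hi => not_not.1 (Nat.find_min hex hi)⟩
  rcases (by omega : k = 0 ∨ (1 ≤ k ∧ k ≤ 4) ∨ k = 5 ∨ k = 6) with rfl | hk₁₄ | rfl | rfl
  · exact M.false_of_not_flat_zero hM (by simpa using hk)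
  · exact M.false_of_flat_run hM hk₁₄.1 hk₁₄.2 hflat hk
  · exact M.false_of_flat_run_five hM hflat (by simpa using hk)
  · exact M.false_of_flat_run_six hM hflat

instance : IsEmpty (TraceModel (GGraph 7)) :=
  ⟨fun M => M.exists_isNormalized.elim fun _ hM => false_of_isNormalized _ hM⟩

end Seven

end TraceModel

/-- The graph `G₇` is not an IP-SEG* graph. -/
theorem G7_not_ipsegstar :
    ¬ ∃ s : ZMod 7 × Fin 3 → IPSeg, IsIPSEGStarModel (GGraph 7) s := by
  rintro ⟨s, hs⟩
  obtain ⟨M⟩ := hs.nonempty_traceModel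
  exact isEmptyElim M
end
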